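/- Let U ⊊ ℂ be a simply connected domain with u ∈ U, and let (U_k) be an increasing sequence of simply connected subdomains containing u with ⋃_k U_k = U. Then the conformal radii r(U_k, u) converge to r(U, u). -/

import Mathlib

open Metric Set Filter Function
open scoped Topology

/-!
Both inequalities come from the Schwarz lemma applied to a composition with an inverse
Riemann map. Since `U_k ⊆ U`, the map `Ψ⁻¹ ∘ Ψ_k` sends the unit disk into itself and fixes `0`,
so `r(U_k, u) ≤ r(U, u)`. Conversely, for `ρ < 1` the compact set `Ψ(closedBall 0 ρ)` lies in `U_k`
for all large `k`, and then `Ψ_k⁻¹ ∘ Ψ` maps `ball 0 ρ` into the unit disk, giving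
`ρ r(U, u) ≤ r(U_k, u)`. The only analytic input beyond Schwarz is that the inverse of an injective
holomorphic map is holomorphic: it is continuous by the open mapping theorem, holomorphic off the
isolated zeros of the derivative, and hence holomorphic everywhere by removability.
-/

namespace AnalyticOnNhd

variable {f : ℂ → ℂ} {D : Set ℂ}

theorem nhds_le_map_nhds_of_injOn (hf : AnalyticOnNhd ℂ f D) (hD : IsOpen D)
    (hinj : InjOn f D) {w : ℂ} (hw : w ∈ D) : 𝓝 (f w) ≤ map f (𝓝 w) := by
  refine (hf w hw).eventually_constant_or_nhds_le_map_nhds.resolve_left fun hconst => ?_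
  have hpunct : ∀ᶠ z in 𝓝[≠] w, (f z = f w ∧ z ∈ D) ∧ z ≠ w :=
    ((hconst.and (hD.mem_nhds hw)).filter_mono nhdsWithin_le_nhds).and self_mem_nhdsWithin
  obtain ⟨z, ⟨hfz, hzD⟩, hzw⟩ := hpunct.exists
  exact hzw (hinj hzD hw hfz)

theorem continuousAt_invFunOn (hf : AnalyticOnNhd ℂ f D) (hD : IsOpen D)
    (hinj : InjOn f D) {w : ℂ} (hw : w ∈ D) : ContinuousAt (invFunOn f D) (f w) := by
  rw [ContinuousAt, hinj.leftInvOn_invFunOn hw]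
  refine (tendsto_map'_iff.2 (tendsto_id.congr' ?_)).mono_left
    (hf.nhds_le_map_nhds_of_injOn hD hinj hw)
  filter_upwards [hD.mem_nhds hw] with z hz using (hinj.leftInvOn_invFunOn hz).symm

theorem differentiableAt_invFunOn_of_deriv_ne_zero (hf : AnalyticOnNhd ℂ f D) (hD : IsOpen D)
    (hinj : InjOn f D) {w : ℂ} (hw : w ∈ D) (hw' : deriv f w ≠ 0) :
    DifferentiableAt ℂ (invFunOn f D) (f w) := by
  have hleft : ∀ᶠ z in 𝓝 w, invFunOn f D (f z) = z := by
    filter_upwards [hD.mem_nhds hw] with z hz using hinj.leftInvOn_invFunOn hz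
  exact ((hf w hw).hasStrictDerivAt.to_local_left_inverse hw' hleft).hasDerivAt.differentiableAt

theorem differentiableAt_invFunOn (hf : AnalyticOnNhd ℂ f D) (hD : IsOpen D)
    (hDc : IsPreconnected D) (hinj : InjOn f D) {z₀ : ℂ} (hz₀ : z₀ ∈ D) (hz₀' : deriv f z₀ ≠ 0)
    {w : ℂ} (hw : w ∈ D) : DifferentiableAt ℂ (invFunOn f D) (f w) := by
  have hzeros : ∀ᶠ z in 𝓝[≠] w, deriv f z ≠ 0 := by
    refine (hf.deriv w hw).eventually_eq_zero_or_eventually_ne_zero.resolve_left fun hzero => ?_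
    exact hz₀' (hf.deriv.eqOn_zero_of_preconnected_of_eventuallyEq_zero hDc hw hzero hz₀)
  have hpunct : ∀ᶠ y in 𝓝[≠] (f w), DifferentiableAt ℂ (invFunOn f D) y := by
    rw [eventually_nhdsWithin_iff]
    refine hf.nhds_le_map_nhds_of_injOn hD hinj hw (eventually_map.2 ?_)
    filter_upwards [hD.mem_nhds hw, eventually_nhdsWithin_iff.1 hzeros] with z hzD hz hfz
    exact hf.differentiableAt_invFunOn_of_deriv_ne_zero hD hinj hzD
      (hz fun hzw => hfz (congrArg f hzw))
  exact (Complex.analyticAt_of_differentiable_on_punctured_nhds_of_continuousAt hpunct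
    (hf.continuousAt_invFunOn hD hinj hw)).differentiableAt

end AnalyticOnNhd

theorem mul_norm_deriv_le_of_image_ball_subset {f g : ℂ → ℂ} {ρ : ℝ} (hρ : 0 < ρ)
    (hf : DifferentiableOn ℂ f (ball 0 ρ)) (hg : DifferentiableOn ℂ g (ball 0 1))
    (hginj : InjOn g (ball 0 1)) (hg₀ : deriv g 0 ≠ 0) (hfg : f 0 = g 0)
    (hsub : f '' ball 0 ρ ⊆ g '' ball 0 1) : ρ * ‖deriv f 0‖ ≤ ‖deriv g 0‖ := by
  set h := invFunOn g (ball 0 1) ∘ f with hh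
  have h0 : h 0 = 0 := by
    rw [hh, comp_apply, hfg, hginj.leftInvOn_invFunOn (mem_ball_self one_pos)]
  have hinv : ∀ w ∈ ball (0 : ℂ) 1, DifferentiableAt ℂ (invFunOn g (ball 0 1)) (g w) :=
    fun _ => (hg.analyticOnNhd isOpen_ball).differentiableAt_invFunOn isOpen_ball
      (convex_ball 0 1).isPreconnected hginj (mem_ball_self one_pos) hg₀
  have hd : ∀ z ∈ ball (0 : ℂ) ρ, DifferentiableAt ℂ h z := by
    intro z hz
    obtain ⟨w, hw, hwz⟩ := hsub (mem_image_of_mem f hz)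
    exact (hwz ▸ hinv w hw).comp z (hf.differentiableAt (isOpen_ball.mem_nhds hz))
  have hmaps : MapsTo h (ball 0 ρ) (closedBall (h 0) 1) := by
    intro z hz
    rw [h0]
    exact ball_subset_closedBall (invFunOn_mem (hsub (mem_image_of_mem f hz)))
  have hschwarz : ‖deriv h 0‖ ≤ 1 / ρ := Complex.norm_deriv_le_div_of_mapsTo_ball
    (fun z hz => (hd z hz).differentiableWithinAt) hmaps hρ
  have hgh : g ∘ h =ᶠ[𝓝 0] f := by
    filter_upwards [isOpen_ball.mem_nhds (mem_ball_self hρ)] with z hz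
    exact invFunOn_eq (hsub (mem_image_of_mem f hz))
  have hchain : deriv f 0 = deriv g 0 * deriv h 0 := by
    have hg0 : DifferentiableAt ℂ g (h 0) := by
      rw [h0]; exact hg.differentiableAt (isOpen_ball.mem_nhds (mem_ball_self one_pos))
    rw [← hgh.deriv_eq, deriv_comp 0 hg0 (hd 0 (mem_ball_self hρ)), h0]
  calc ρ * ‖deriv f 0‖ = ‖deriv g 0‖ * (ρ * ‖deriv h 0‖) := by
        rw [hchain, norm_mul]; ring
    _ ≤ ‖deriv g 0‖ * 1 := by
        gcongr
        rwa [le_div_iff₀ hρ, mul_comm] at hschwarz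
    _ = ‖deriv g 0‖ := mul_one _

theorem IsCompact.eventually_subset_of_monotone {X : Type*} [TopologicalSpace X] {K : Set X}
    (hK : IsCompact K) {V : ℕ → Set X} (hVo : ∀ k, IsOpen (V k)) (hV : Monotone V)
    (hKV : K ⊆ ⋃ k, V k) : ∀ᶠ k in atTop, K ⊆ V k := by
  obtain ⟨i, hi⟩ := hK.elim_directed_cover V hVo hKV hV.directed_le
  filter_upwards [eventually_ge_atTop i] with k hk using hi.trans (hV hk)

theorem tendsto_of_le_of_eventually_mul_le {α : Type*} {l : Filter α} {a : α → ℝ} {r : ℝ}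
    (hr : 0 < r) (hle : ∀ k, a k ≤ r) (hge : ∀ ρ ∈ Ioo (0 : ℝ) 1, ∀ᶠ k in l, ρ * r ≤ a k) :
    Tendsto a l (𝓝 r) := by
  refine tendsto_order.2 ⟨fun b hb => ?_, fun b hb => .of_forall fun k => (hle k).trans_lt hb⟩
  obtain ⟨ρ, hbρ, hρ1⟩ := exists_between (max_lt ((div_lt_one hr).2 hb) one_pos : max (b / r) 0 < 1)
  filter_upwards [hge ρ ⟨(le_max_right _ _).trans_lt hbρ, hρ1⟩] with k hk
  calc b = b / r * r := (div_mul_cancel₀ b hr.ne').symm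
    _ < ρ * r := by gcongr; exact (le_max_left _ _).trans_lt hbρ
    _ ≤ a k := hk

theorem stmt_18_general (U : Set ℂ) (u : ℂ)
    (Uk : ℕ → Set ℂ) (hUko : ∀ k, IsOpen (Uk k)) (hUkinc : ∀ k, Uk k ⊆ Uk (k + 1))
    (hUkU : ⋃ k, Uk k = U)
    (Ψ : ℂ → ℂ)
    (hΨd : DifferentiableOn ℂ Ψ (Metric.ball 0 1))
    (hΨinj : Set.InjOn Ψ (Metric.ball 0 1))
    (hΨsurj : Ψ '' Metric.ball 0 1 = U) (hΨ0 : Ψ 0 = u)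
    (Ψk : ℕ → ℂ → ℂ)
    (hΨkd : ∀ k, DifferentiableOn ℂ (Ψk k) (Metric.ball 0 1))
    (hΨkinj : ∀ k, Set.InjOn (Ψk k) (Metric.ball 0 1))
    (hΨksurj : ∀ k, Ψk k '' Metric.ball 0 1 = Uk k) (hΨk0 : ∀ k, Ψk k 0 = u)
    (r : ℝ) (hr : 0 < r) (hΨr : deriv Ψ 0 = (r : ℂ))
    (rk : ℕ → ℝ) (hrk : ∀ k, 0 < rk k) (hΨkr : ∀ k, deriv (Ψk k) 0 = (rk k : ℂ)) :
    Tendsto rk atTop (nhds r) := by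
  have hr₀ : deriv Ψ 0 ≠ 0 := by rw [hΨr]; exact_mod_cast hr.ne'
  have hrk₀ : ∀ k, deriv (Ψk k) 0 ≠ 0 := fun k => by rw [hΨkr k]; exact_mod_cast (hrk k).ne'
  refine tendsto_of_le_of_eventually_mul_le hr (fun k => ?_) (fun ρ hρ => ?_)
  · have := mul_norm_deriv_le_of_image_ball_subset one_pos (hΨkd k) hΨd hΨinj hr₀
      (by rw [hΨk0, hΨ0]) (by rw [hΨksurj, hΨsurj, ← hUkU]; exact subset_iUnion Uk k)
    simpa [hΨkr, hΨr, abs_of_pos hr, abs_of_pos (hrk k)] using this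
  · have hK : IsCompact (Ψ '' closedBall 0 ρ) := (isCompact_closedBall 0 ρ).image_of_continuousOn
      (hΨd.continuousOn.mono (closedBall_subset_ball hρ.2))
    filter_upwards [hK.eventually_subset_of_monotone hUko (monotone_nat_of_le_succ hUkinc)
      (by rw [hUkU, ← hΨsurj]; exact image_mono (closedBall_subset_ball hρ.2))] with k hk
    have := mul_norm_deriv_le_of_image_ball_subset hρ.1 (hΨd.mono (ball_subset_ball hρ.2.le))
      (hΨkd k) (hΨkinj k) (hrk₀ k) (by rw [hΨk0, hΨ0])
      ((image_mono ball_subset_closedBall).trans (hk.trans (hΨksurj k).superset))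
    simpa [hΨkr, hΨr, abs_of_pos hr, abs_of_pos (hrk k)] using this

theorem stmt_18 (U : Set ℂ) (hU : IsOpen U) (hUne : U ≠ Set.univ) (u : ℂ) (hu : u ∈ U)
    (Uk : ℕ → Set ℂ) (hUko : ∀ k, IsOpen (Uk k)) (hUkinc : ∀ k, Uk k ⊆ Uk (k + 1))
    (hUkU : ⋃ k, Uk k = U) (hUku : ∀ k, u ∈ Uk k)
    (Ψ : ℂ → ℂ)
    (hΨd : DifferentiableOn ℂ Ψ (Metric.ball 0 1))
    (hΨinj : Set.InjOn Ψ (Metric.ball 0 1))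
    (hΨsurj : Ψ '' Metric.ball 0 1 = U) (hΨ0 : Ψ 0 = u)
    (Ψk : ℕ → ℂ → ℂ)
    (hΨkd : ∀ k, DifferentiableOn ℂ (Ψk k) (Metric.ball 0 1))
    (hΨkinj : ∀ k, Set.InjOn (Ψk k) (Metric.ball 0 1))
    (hΨksurj : ∀ k, Ψk k '' Metric.ball 0 1 = Uk k) (hΨk0 : ∀ k, Ψk k 0 = u)
    (r : ℝ) (hr : 0 < r) (hΨr : deriv Ψ 0 = (r : ℂ))
    (rk : ℕ → ℝ) (hrk : ∀ k, 0 < rk k) (hΨkr : ∀ k, deriv (Ψk k) 0 = (rk k : ℂ)) :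
    Tendsto rk atTop (nhds r) :=
  stmt_18_general U u Uk hUko hUkinc hUkU Ψ hΨd hΨinj hΨsurj hΨ0 Ψk hΨkd hΨkinj hΨksurj hΨk0 r hr
    hΨr rk hrk hΨkr
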